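/- arXiv:2009.09510 — 5 statements merged into one kernel-verified Lean document; each statement's English description precedes it below -/
import Mathlib

section
/- Suppose n = Σ_{i=1}^{m} δ_i · F_i is the Zeckendorf decomposition of n (each δ_i ∈ {0,1}, no two consecutive indices have δ_i = δ_{i+1} = 1, and δ_m = 1). Then Σ_{j=1}^{m} (F_{j+2} - j - 2)·δ_j ≤ ((√5+3)/2)·n - Σ_{j=1}^{m} j·δ_j - ((1+√5)/2)·Σ_{j=1}^{m} δ_j, as real numbers. -/
/-!
By Binet, `F_{j+2} = φ² F_j + ψ^(j+1)` with `ψ = 1 - φ ∈ (-1, 0)`, and for `j ≥ 1` the error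
`ψ^(j+1)` is at most `ψ² = 2 - φ`. Hence every summand satisfies
`(F_{j+2} - j - 2) δ_j ≤ (φ² F_j - j - φ) δ_j`, and summing gives the bound since
`(√5 + 3)/2 = φ²` and `(1 + √5)/2 = φ`.
-/

open Real goldenRatio Finset

theorem Real.coe_fib_add_two_eq_goldenRatio_sq_mul_fib_add_goldenConj_pow (k : ℕ) :
    (Nat.fib (k + 2) : ℝ) = φ ^ 2 * Nat.fib k + ψ ^ k := by
  linear_combination fib_succ_sub_goldenRatio_mul_fib (k + 1)
    + φ * fib_succ_sub_goldenRatio_mul_fib k + ψ ^ k * goldenRatio_add_goldenConj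

theorem Real.goldenConj_pow_le_goldenConj_sq {k : ℕ} (hk : 2 ≤ k) : ψ ^ k ≤ ψ ^ 2 :=
  calc ψ ^ k ≤ |ψ| ^ k := by rw [← abs_pow]; exact le_abs_self _
    _ ≤ |ψ| ^ 2 := pow_le_pow_of_le_one (abs_nonneg ψ)
        (abs_le.2 ⟨neg_one_lt_goldenConj.le, goldenConj_neg.le.trans zero_le_one⟩) hk
    _ = ψ ^ 2 := sq_abs ψ

theorem Real.coe_fib_add_two_le {k : ℕ} (hk : 2 ≤ k) :
    (Nat.fib (k + 2) : ℝ) ≤ φ ^ 2 * Nat.fib k + 2 - φ := by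
  have hψ_sq : ψ ^ 2 = 2 - φ := by linear_combination goldenConj_sq - goldenRatio_add_goldenConj
  linarith [coe_fib_add_two_eq_goldenRatio_sq_mul_fib_add_goldenConj_pow k,
    goldenConj_pow_le_goldenConj_sq hk]

theorem zeckendorf_game_upper_bound_general (n m : ℕ) (δ : ℕ → ℕ)
    (hsum : n = ∑ i ∈ Finset.Icc 1 m, δ i * Nat.fib (i + 1)) :
    ∑ j ∈ Finset.Icc 1 m, ((Nat.fib (j + 3) : ℝ) - j - 2) * (δ j : ℝ)
      ≤ ((Real.sqrt 5 + 3) / 2) * (n : ℝ)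
        - ∑ j ∈ Finset.Icc 1 m, (j : ℝ) * (δ j : ℝ)
        - ((1 + Real.sqrt 5) / 2) * ∑ j ∈ Finset.Icc 1 m, (δ j : ℝ) := by
  have hφ_sq : (√5 + 3) / 2 = φ ^ 2 := by rw [goldenRatio_sq, goldenRatio]; ring
  rw [hφ_sq, show (1 + √5) / 2 = φ from rfl, hsum]
  push_cast
  rw [mul_sum, mul_sum, ← sum_sub_distrib, ← sum_sub_distrib]
  refine sum_le_sum fun j hj => ?_
  have hfib : (Nat.fib (j + 3) : ℝ) ≤ φ ^ 2 * Nat.fib (j + 1) + 2 - φ :=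
    coe_fib_add_two_le (k := j + 1) (by grind)
  linarith [mul_le_mul_of_nonneg_right hfib (Nat.cast_nonneg (α := ℝ) (δ j))]

/-- If n = Σ_{i=1}^m δ_i F_i is the Zeckendorf decomposition of n (δ_i ∈ {0,1},
    no two consecutive indices used, δ_m = 1), with F_i = fib (i+1), then
    Σ_j (F_{j+2} - j - 2)·δ_j ≤ ((√5+3)/2)·n - Σ_j j·δ_j - ((1+√5)/2)·Σ_j δ_j. -/
theorem zeckendorf_game_upper_bound (n m : ℕ) (δ : ℕ → ℕ)
    (hδ : ∀ i, δ i ≤ 1) (hnc : ∀ i, δ i * δ (i + 1) = 0) (hm : δ m = 1)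
    (hsum : n = ∑ i ∈ Finset.Icc 1 m, δ i * Nat.fib (i + 1)) :
    ∑ j ∈ Finset.Icc 1 m, ((Nat.fib (j + 3) : ℝ) - j - 2) * (δ j : ℝ)
      ≤ ((Real.sqrt 5 + 3) / 2) * (n : ℝ)
        - ∑ j ∈ Finset.Icc 1 m, (j : ℝ) * (δ j : ℝ)
        - ((1 + Real.sqrt 5) / 2) * ∑ j ∈ Finset.Icc 1 m, (δ j : ℝ) :=
  zeckendorf_game_upper_bound_general n m δ hsum
end

section
/- Let A be the (m-1)×(m-1) upper triangular matrix with entries A_{i,i} = 1, A_{i,i+1} = -2, A_{i,i+3} = 1 (for indices within range), and 0 otherwise. Then A is invertible and the entries of A^{-1} satisfy (A^{-1})_{i,j} = F_{j-i+2} - 1 for j ≥ i and 0 for j < i, where F_1 = 1, F_2 = 2 is the shifted Fibonacci sequence. -/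
/-!
With `N` the nilpotent shift, `A = 1 - 2N + N³ = (1 - N)(1 - N - N²)`, so `A⁻¹` is the product
of the inverses of these two factors: its `d`-th superdiagonal is constant, equal to the partial sum
`fib 1 + ⋯ + fib (d + 1) = fib (d + 3) - 1` (this is `F_{d+2} - 1` since `F_k = fib (k + 1)`).
It therefore suffices to check `A * B = 1` for this candidate `B`, which amounts to the recurrence
`x d - 2 x (d - 1) + x (d - 3) = [d = 0]` for `x d = fib (d + 3) - 1`, extended by `0` to `d < 0`.
-/

def fibInvEntry (i j : ℕ) : ℚ := if i ≤ j then (Nat.fib (j - i + 3) : ℚ) - 1 else 0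

lemma fibInvEntry_of_lt {i j : ℕ} (h : j < i) : fibInvEntry i j = 0 := if_neg (by omega)

lemma fibInvEntry_of_add_eq {i j d : ℕ} (h : i + d = j) :
    fibInvEntry i j = (Nat.fib (d + 3) : ℚ) - 1 := by
  subst h; simp [fibInvEntry]

lemma fib_add_six_eq (n : ℕ) :
    (Nat.fib (n + 6) : ℚ) = 2 * Nat.fib (n + 5) - Nat.fib (n + 3) := by
  simp only [Nat.fib_add_two (n := n + 4), Nat.fib_add_two (n := n + 3),
    Nat.fib_add_two (n := n + 2)]
  push_cast; ring

lemma fibInvEntry_recurrence (i j : ℕ) :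
    fibInvEntry i j - 2 * fibInvEntry (i + 1) j + fibInvEntry (i + 3) j =
      if i = j then 1 else 0 := by
  rcases Nat.lt_or_ge j i with h | h
  · simp [fibInvEntry_of_lt, h, h.ne', show j < i + 1 by omega, show j < i + 3 by omega]
  obtain ⟨d, rfl⟩ := Nat.exists_eq_add_of_le h
  match d with
  | 0 =>
    rw [fibInvEntry_of_add_eq (d := 0) rfl, fibInvEntry_of_lt (by omega),
      fibInvEntry_of_lt (by omega)]
    norm_num
  | 1 =>
    rw [fibInvEntry_of_add_eq (d := 1) rfl, fibInvEntry_of_add_eq (d := 0) (by omega),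
      fibInvEntry_of_lt (by omega)]
    norm_num
  | 2 =>
    rw [fibInvEntry_of_add_eq (d := 2) rfl, fibInvEntry_of_add_eq (d := 1) (by omega),
      fibInvEntry_of_lt (by omega)]
    norm_num
  | e + 3 =>
    rw [fibInvEntry_of_add_eq (d := e + 3) rfl, fibInvEntry_of_add_eq (d := e + 2) (by omega),
      fibInvEntry_of_add_eq (d := e) (by omega), fib_add_six_eq, if_neg (by omega)]
    ring

lemma Fin.sum_ite_val_eq {M : Type*} [AddCommMonoid M] {n : ℕ} (a : ℕ) (f : ℕ → M)
    (hf : n ≤ a → f a = 0) : ∑ k : Fin n, (if (k : ℕ) = a then f k else 0) = f a := by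
  rw [Fin.sum_univ_eq_sum_range (fun k => if k = a then f k else 0), Finset.sum_ite_eq']
  split_ifs with ha
  · rfl
  · exact (hf (by simpa using ha)).symm

def fibInvMatrix (n : ℕ) : Matrix (Fin n) (Fin n) ℚ := Matrix.of fun i j => fibInvEntry i j

lemma mul_fibInvMatrix {n : ℕ} (A : Matrix (Fin n) (Fin n) ℚ)
    (hA : ∀ i j : Fin n, A i j = if j.1 = i.1 then 1 else if j.1 = i.1 + 1 then -2
        else if j.1 = i.1 + 3 then 1 else 0) :
    A * fibInvMatrix n = 1 := by
  ext i j
  have hvanish (k : ℕ) (hk : n ≤ k) : fibInvEntry k j = 0 := fibInvEntry_of_lt (by omega)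
  calc (A * fibInvMatrix n) i j
      = ∑ k : Fin n, ((if (k : ℕ) = i then fibInvEntry k j else 0) +
          (if (k : ℕ) = i + 1 then -2 * fibInvEntry k j else 0) +
          (if (k : ℕ) = i + 3 then fibInvEntry k j else 0)) := by
        refine Matrix.mul_apply.trans (Finset.sum_congr rfl fun k _ => ?_)
        rw [hA, fibInvMatrix, Matrix.of_apply]
        split_ifs <;> first | omega | ring
    _ = fibInvEntry i j - 2 * fibInvEntry (i + 1) j + fibInvEntry (i + 3) j := by
        rw [Finset.sum_add_distrib, Finset.sum_add_distrib,
          Fin.sum_ite_val_eq _ (fibInvEntry · j) (hvanish _),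
          Fin.sum_ite_val_eq _ (-2 * fibInvEntry · j) (by simp [hvanish _ ·]),
          Fin.sum_ite_val_eq _ (fibInvEntry · j) (hvanish _)]
        ring
    _ = (1 : Matrix (Fin n) (Fin n) ℚ) i j := by
        simp [fibInvEntry_recurrence, Matrix.one_apply, Fin.ext_iff]

theorem inverse_of_game_matrix_general (m : ℕ)
    (A : Matrix (Fin (m - 1)) (Fin (m - 1)) ℚ)
    (hA : ∀ i j : Fin (m - 1),
      A i j = if j.1 = i.1 then 1 else if j.1 = i.1 + 1 then -2
        else if j.1 = i.1 + 3 then 1 else 0) :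
    IsUnit A ∧ ∀ i j : Fin (m - 1),
      A⁻¹ i j = if i.1 ≤ j.1 then (Nat.fib (j.1 - i.1 + 3) : ℚ) - 1 else 0 := by
  have hAB := mul_fibInvMatrix A hA
  refine ⟨(Matrix.isUnit_iff_isUnit_det A).mpr (Matrix.isUnit_det_of_right_inverse hAB),
    fun i j => ?_⟩
  rw [Matrix.inv_eq_right_inv hAB]
  rfl

/-- The (m-1)×(m-1) matrix with 1 on the diagonal, -2 on the first superdiagonal and
    1 on the third superdiagonal is invertible, and its inverse has entries
    F_{j-i+2} - 1 above (and on) the diagonal and 0 below, where F_i = fib (i+1). -/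
theorem inverse_of_game_matrix (m : ℕ) (hm : 2 ≤ m)
    (A : Matrix (Fin (m - 1)) (Fin (m - 1)) ℚ)
    (hA : ∀ i j : Fin (m - 1),
      A i j = if j.1 = i.1 then 1 else if j.1 = i.1 + 1 then -2
        else if j.1 = i.1 + 3 then 1 else 0) :
    IsUnit A ∧ ∀ i j : Fin (m - 1),
      A⁻¹ i j = if i.1 ≤ j.1 then (Nat.fib (j.1 - i.1 + 3) : ℚ) - 1 else 0 :=
  inverse_of_game_matrix_general m A hA
end

section
/- Suppose n = Σ_i δ_i F_i is the Zeckendorf decomposition of n with largest index m. If nonnegative integers MC_1, MS_2, …, MS_{m-1}, MC_2, …, MC_{m-1} satisfy the system: MC_1 - 2·MS_2 + MS_4 - MC_2 - MC_3 = δ_2; for 3 ≤ i ≤ m: MS_{i-1} - 2·MS_i + MS_{i+2} + MC_{i-1} - MC_i - MC_{i+1} = δ_i (with MS_k = MC_k = 0 for k ≥ m); then MC_1 + Σ_{i=2}^{m-1} MS_i + Σ_{i=2}^{m-1} MC_i = Σ_{j=1}^{m} (F_{j+2} - j - 2)·δ_j - Σ_{i=2}^{m-1} (i-1)·MC_i.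 -/
/-- The weight `w k = F_{k+2} - k - 2` (with `F_i = fib (i+1)`). -/
private def w : ℕ → ℤ := fun k => (Nat.fib (k + 3) : ℤ) - k - 2

private lemma w_rec1 (j : ℕ) : w (j + 3) - 2 * w (j + 2) + w j = 1 := by
  have a : (Nat.fib (j + 6) : ℤ) = Nat.fib (j + 4) + Nat.fib (j + 5) := by
    rw [show j + 6 = j + 4 + 2 from rfl, Nat.fib_add_two]; push_cast; ring
  have b : (Nat.fib (j + 5) : ℤ) = Nat.fib (j + 3) + Nat.fib (j + 4) := by
    rw [show j + 5 = j + 3 + 2 from rfl, Nat.fib_add_two]; push_cast; ring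
  simp only [w]
  push_cast
  linarith [a, b]

private lemma w_rec2 (j : ℕ) : w (j + 3) - w (j + 2) - w (j + 1) = (j : ℤ) + 2 := by
  have a : (Nat.fib (j + 6) : ℤ) = Nat.fib (j + 4) + Nat.fib (j + 5) := by
    rw [show j + 6 = j + 4 + 2 from rfl, Nat.fib_add_two]; push_cast; ring
  simp only [w]
  push_cast
  linarith [a]

private lemma w_zero : w 0 = 0 := by decide
private lemma w_one : w 1 = 0 := by decide
private lemma w_two : w 2 = 1 := by decide

/-- Partial telescoping of the weighted sum of the conservation equations. -/
private lemma claim (m : ℕ) (δ MS MC : ℕ → ℕ)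
    (heq2 : (MC 1 : ℤ) - 2 * MS 2 + MS 4 - MC 2 - MC 3 = δ 2)
    (heqi : ∀ i, 3 ≤ i → i ≤ m →
      (MS (i - 1) : ℤ) - 2 * MS i + MS (i + 2) + MC (i - 1) - MC i - MC (i + 1) = δ i) :
    ∀ j, j + 2 ≤ m →
      ∑ i ∈ Finset.Icc 2 (j + 2), w i * δ i
        = MC 1 + (∑ k ∈ Finset.Icc 2 (j + 1), (MS k : ℤ))
          + (∑ k ∈ Finset.Icc 2 (j + 1), (k : ℤ) * MC k)
          + (w j - 2 * w (j + 2)) * MS (j + 2) + w (j + 1) * MS (j + 3)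
          + w (j + 2) * MS (j + 4)
          - (w (j + 2) + w (j + 1)) * MC (j + 2) - w (j + 2) * MC (j + 3) := by
  intro j
  induction j with
  | zero =>
    intro _
    rw [show Finset.Icc 2 (0 + 2) = {2} by decide,
        show Finset.Icc 2 (0 + 1) = (∅ : Finset ℕ) by decide]
    simp only [Finset.sum_singleton, Finset.sum_empty]
    rw [w_zero, w_one, w_two]
    norm_num
    linear_combination -heq2
  | succ j ih =>
    intro hj
    have ih' := ih (by omega)
    have e := heqi (j + 3) (by omega) (by omega)
    rw [show j + 3 - 1 = j + 2 from rfl, show j + 3 + 2 = j + 5 from rfl,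
        show j + 3 + 1 = j + 4 from rfl] at e
    rw [show j + 1 + 2 = (j + 2) + 1 from rfl,
        Finset.sum_Icc_succ_top (by omega : 2 ≤ (j + 2) + 1),
        show j + 1 + 1 = (j + 1) + 1 from rfl,
        Finset.sum_Icc_succ_top (by omega : 2 ≤ (j + 1) + 1) (fun k => (MS k : ℤ)),
        Finset.sum_Icc_succ_top (by omega : 2 ≤ (j + 1) + 1) (fun k => (k : ℤ) * MC k)]
    simp only [show j + 1 + 1 + 1 = j + 3 from rfl, show j + 1 + 1 = j + 2 from rfl,
      show j + 1 + 2 = j + 3 from rfl, show j + 1 + 3 = j + 4 from rfl,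
      show j + 1 + 4 = j + 5 from rfl]
    push_cast
    linear_combination ih' - w (j + 3) * e + (MS (j + 2) : ℤ) * w_rec1 j
      + (MC (j + 2) : ℤ) * w_rec2 j

/-- Given the Zeckendorf digits δ of n with largest index m (F_i = fib (i+1)),
    and nonnegative integers MC, MS satisfying the move-count conservation system,
    the total number of moves equals Σ_j (F_{j+2}-j-2)·δ_j - Σ_i (i-1)·MC_i. -/
theorem game_length_formula (n m : ℕ) (δ MS MC : ℕ → ℕ)
    (hδ : ∀ i, δ i ≤ 1) (hnc : ∀ i, δ i * δ (i + 1) = 0) (hm : δ m = 1)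
    (hout : ∀ i, m < i → δ i = 0)
    (hsum : n = ∑ i ∈ Finset.Icc 1 m, δ i * Nat.fib (i + 1))
    (hMS0 : ∀ k, m ≤ k → MS k = 0) (hMC0 : ∀ k, m ≤ k → MC k = 0)
    (heq2 : (MC 1 : ℤ) - 2 * MS 2 + MS 4 - MC 2 - MC 3 = δ 2)
    (heqi : ∀ i, 3 ≤ i → i ≤ m →
      (MS (i - 1) : ℤ) - 2 * MS i + MS (i + 2) + MC (i - 1) - MC i - MC (i + 1) = δ i) :
    (MC 1 : ℤ) + ∑ i ∈ Finset.Icc 2 (m - 1), (MS i : ℤ)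
        + ∑ i ∈ Finset.Icc 2 (m - 1), (MC i : ℤ)
      = ∑ j ∈ Finset.Icc 1 m, ((Nat.fib (j + 3) : ℤ) - j - 2) * (δ j : ℤ)
        - ∑ i ∈ Finset.Icc 2 (m - 1), ((i : ℤ) - 1) * (MC i : ℤ) := by
  rcases le_or_gt m 1 with hm1 | hm1
  · -- m = 0 or m = 1 : all sums over Icc 2 (m-1) are empty, and MC 1 = 0.
    have hMC1 : MC 1 = 0 := hMC0 1 hm1
    have he : Finset.Icc 2 (m - 1) = (∅ : Finset ℕ) := by
      apply Finset.Icc_eq_empty; omega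
    interval_cases m
    · simp [he, hMC1]
    · rw [he]
      simp [hMC1, show Nat.fib 4 = 3 from rfl]
  · -- m ≥ 2
    obtain ⟨j, rfl⟩ : ∃ j, m = j + 2 := ⟨m - 2, by omega⟩
    have hc := claim (j + 2) δ MS MC heq2 heqi j le_rfl
    have z1 : MS (j + 2) = 0 := hMS0 _ le_rfl
    have z2 : MS (j + 3) = 0 := hMS0 _ (by omega)
    have z3 : MS (j + 4) = 0 := hMS0 _ (by omega)
    have z4 : MC (j + 2) = 0 := hMC0 _ le_rfl
    have z5 : MC (j + 3) = 0 := hMC0 _ (by omega)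
    rw [z1, z2, z3, z4, z5] at hc
    simp only [Nat.cast_zero, mul_zero, add_zero, sub_zero] at hc
    -- split off the j = 1 term of the big sum (its weight w 1 = 0)
    have hsplit : Finset.Icc 1 (j + 2) = insert 1 (Finset.Icc 2 (j + 2)) := by
      ext x
      simp only [Finset.mem_Icc, Finset.mem_insert]
      omega
    rw [show j + 2 - 1 = j + 1 from rfl, hsplit,
        Finset.sum_insert (by simp)]
    have hone : ((Nat.fib (1 + 3) : ℤ) - (1 : ℕ) - 2) * (δ 1 : ℤ) = 0 := by
      norm_num [show Nat.fib 4 = 3 from rfl]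
    rw [hone, zero_add]
    -- combine the MC sums
    have hs : ∑ k ∈ Finset.Icc 2 (j + 1), (k : ℤ) * MC k
        = (∑ k ∈ Finset.Icc 2 (j + 1), (MC k : ℤ))
          + ∑ k ∈ Finset.Icc 2 (j + 1), ((k : ℤ) - 1) * MC k := by
      rw [← Finset.sum_add_distrib]
      exact Finset.sum_congr rfl fun k _ => by ring
    have hw : ∑ i ∈ Finset.Icc 2 (j + 2), w i * δ i
        = ∑ i ∈ Finset.Icc 2 (j + 2), ((Nat.fib (i + 3) : ℤ) - i - 2) * (δ i : ℤ) := by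
      exact Finset.sum_congr rfl fun i _ => by simp [w]
    rw [hw] at hc
    linarith [hc, hs]
end

section
/- In any Zeckendorf game on n that starts from n copies of F_1 and ends at the Zeckendorf decomposition of n, let MC_i and MS_i denote the numbers of combine moves and split moves at index i used, respectively. Then MC_1 - 2MS_2 + MS_4 - MC_2 - MC_3 = δ_2, where δ_2 is the number of F_2's in the Zeckendorf decomposition of n. -/
/-- Moves of the Zeckendorf game, acting on multisets of Fibonacci indices
    (the index i represents F_i = fib (i+1)). -/
inductive ZMove where
  | combine (i : ℕ)
  | split (i : ℕ)
  deriving DecidableEq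

/-- One step of the Zeckendorf game: `ZStep s mv s'` means move `mv` transforms
    state `s` into state `s'`.  Combine 1 is F₁,F₁ → F₂; combine i (i ≥ 2) is
    F_{i-1},F_i → F_{i+1}; split 2 is F₂,F₂ → F₁,F₃; split i (i ≥ 3) is
    F_i,F_i → F_{i-2},F_{i+1}. -/
def ZStep : Multiset ℕ → ZMove → Multiset ℕ → Prop
  | s, ZMove.combine 1, s' => ({1, 1} : Multiset ℕ) ≤ s ∧ s' = s - {1, 1} + {2}
  | s, ZMove.combine (i + 2), s' =>
      ({i + 1, i + 2} : Multiset ℕ) ≤ s ∧ s' = s - {i + 1, i + 2} + {i + 3}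
  | s, ZMove.split 2, s' => ({2, 2} : Multiset ℕ) ≤ s ∧ s' = s - {2, 2} + {1, 3}
  | s, ZMove.split (i + 3), s' =>
      ({i + 3, i + 3} : Multiset ℕ) ≤ s ∧ s' = s - {i + 3, i + 3} + {i + 1, i + 4}
  | _, _, _ => False

/-- `ZPlays s L t`: starting from state `s`, the list of moves `L` can be played
    in order, ending in state `t`. -/
inductive ZPlays : Multiset ℕ → List ZMove → Multiset ℕ → Prop
  | nil (s : Multiset ℕ) : ZPlays s [] s
  | cons {s s' t : Multiset ℕ} {mv : ZMove} {L : List ZMove} :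
      ZStep s mv s' → ZPlays s' L t → ZPlays s (mv :: L) t


def zeff : ZMove → ℤ
  | .combine 1 => 1
  | .combine 2 => -1
  | .combine 3 => -1
  | .combine _ => 0
  | .split 2 => -2
  | .split 4 => 1
  | .split _ => 0

lemma step_count {s s' : Multiset ℕ} {mv : ZMove} (h : ZStep s mv s') :
    (s'.count 2 : ℤ) = s.count 2 + zeff mv := by
  cases mv with
  | combine i =>
    match i with
    | 0 => exact absurd h id
    | 1 =>
      obtain ⟨hle, rfl⟩ := h
      simp [Multiset.count_sub, Multiset.count_add, zeff]
    | 2 =>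
      obtain ⟨hle, rfl⟩ := h
      have h1 : 1 ≤ s.count 2 := by
        have := Multiset.count_le_of_le 2 hle; simpa using this
      simp [Multiset.count_sub, Multiset.count_add, zeff]
      omega
    | 3 =>
      obtain ⟨hle, rfl⟩ := h
      have h1 : 1 ≤ s.count 2 := by
        have := Multiset.count_le_of_le 2 hle; simpa using this
      simp [Multiset.count_sub, Multiset.count_add, zeff]
      omega
    | (k+4) =>
      obtain ⟨hle, rfl⟩ := h
      simp [Multiset.count_sub, Multiset.count_add, zeff]
  | split i =>
    match i with
    | 0 => exact absurd h id
    | 1 => exact absurd h id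
    | 2 =>
      obtain ⟨hle, rfl⟩ := h
      have h1 : 2 ≤ s.count 2 := by
        have := Multiset.count_le_of_le 2 hle; simpa using this
      simp [Multiset.count_sub, Multiset.count_add, zeff]
      omega
    | 3 =>
      obtain ⟨hle, rfl⟩ := h
      simp [Multiset.count_sub, Multiset.count_add, zeff]
    | 4 =>
      obtain ⟨hle, rfl⟩ := h
      simp [Multiset.count_sub, Multiset.count_add, zeff]
    | (k+5) =>
      obtain ⟨hle, rfl⟩ := h
      simp [Multiset.count_sub, Multiset.count_add, zeff]

lemma plays_count {s t : Multiset ℕ} {L : List ZMove} (h : ZPlays s L t) :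
    (t.count 2 : ℤ) = s.count 2 + (L.map zeff).sum := by
  induction h with
  | nil => simp
  | cons hstep _ ih =>
    rw [ih, step_count hstep]; simp; ring

set_option maxHeartbeats 1000000 in
lemma sum_eff (L : List ZMove) :
    (L.map zeff).sum = (L.count (ZMove.combine 1) : ℤ) - 2 * L.count (ZMove.split 2)
        + L.count (ZMove.split 4) - L.count (ZMove.combine 2)
        - L.count (ZMove.combine 3) := by
  induction L with
  | nil => simp
  | cons mv L ih =>
    simp only [List.map_cons, List.sum_cons, List.count_cons, beq_iff_eq, ih]
    have : zeff mv = (if mv = ZMove.combine 1 then (1:ℤ) else 0)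
        - 2 * (if mv = ZMove.split 2 then 1 else 0)
        + (if mv = ZMove.split 4 then 1 else 0)
        - (if mv = ZMove.combine 2 then 1 else 0)
        - (if mv = ZMove.combine 3 then 1 else 0) := by
      cases mv with
      | combine i =>
        match i with
        | 0 => simp [zeff]
        | 1 => simp [zeff]
        | 2 => simp [zeff]
        | 3 => simp [zeff]
        | (k+4) => simp [zeff]
      | split i =>
        match i with
        | 0 => simp [zeff]
        | 1 => simp [zeff]
        | 2 => simp [zeff]
        | 3 => simp [zeff]
        | 4 => simp [zeff]
        | (k+5) => simp [zeff]
    rw [this]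
    push_cast
    split_ifs <;> ring

/-- Conservation identity for F₂'s: if a game on n evolves from n copies of F₁ to the
    Zeckendorf decomposition of n (with digits δ, largest index m), then
    MC₁ - 2·MS₂ + MS₄ - MC₂ - MC₃ = δ₂. -/
theorem f2_conservation (n m : ℕ) (δ : ℕ → ℕ)
    (hδ : ∀ i, δ i ≤ 1) (hnc : ∀ i, δ i * δ (i + 1) = 0) (hm : δ m = 1)
    (hout : ∀ i, m < i → δ i = 0)
    (hsum : n = ∑ i ∈ Finset.Icc 1 m, δ i * Nat.fib (i + 1))
    (L : List ZMove)
    (hplay : ZPlays (Multiset.replicate n 1) L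
      (∑ i ∈ Finset.Icc 1 m, δ i • ({i} : Multiset ℕ))) :
    (L.count (ZMove.combine 1) : ℤ) - 2 * L.count (ZMove.split 2)
        + L.count (ZMove.split 4) - L.count (ZMove.combine 2)
        - L.count (ZMove.combine 3) = δ 2 := by
  have hfin := plays_count hplay
  rw [sum_eff] at hfin
  have h0 : (Multiset.replicate n 1).count 2 = 0 := by
    simp [Multiset.count_replicate]
  have ht : (∑ i ∈ Finset.Icc 1 m, δ i • ({i} : Multiset ℕ)).count 2 = δ 2 := by
    rw [Multiset.count_sum']
    simp only [Multiset.count_nsmul, Multiset.count_singleton]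
    rw [Finset.sum_eq_single 2]
    · simp
    · intro b _ hb
      simp [Ne.symm hb]
    · intro h2
      have hm2 : m < 2 := by
        simp only [Finset.mem_Icc] at h2
        omega
      simp [hout 2 hm2]
  rw [ht, h0] at hfin
  omega
end

section
/- For every n ≥ 2 that is not of the form F_k - 1 for any k ≥ 2, either the smallest index in the Zeckendorf decomposition of n is at least 3, or the Zeckendorf decomposition contains two summands F_a and F_b (a < b, with no summand strictly between them) whose index gap b - a is at least 3. -/
/-- For n ≥ 2 not of the form F_k - 1 (k ≥ 2), with Zeckendorf digits δ and largest
    index m (F_i = fib (i+1)): either the smallest index used is at least 3, or two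
    adjacent summands have an index gap of at least 3. -/
theorem zeckendorf_gap_dichotomy (n m : ℕ) (hn : 2 ≤ n) (δ : ℕ → ℕ)
    (hδ : ∀ i, δ i ≤ 1) (hnc : ∀ i, δ i * δ (i + 1) = 0) (hm : δ m = 1)
    (hout : ∀ i, m < i → δ i = 0)
    (hsum : n = ∑ i ∈ Finset.Icc 1 m, δ i * Nat.fib (i + 1))
    (hnot : ∀ k, 2 ≤ k → n ≠ Nat.fib (k + 1) - 1) :
    (δ 1 = 0 ∧ δ 2 = 0) ∨
      ∃ a b, a < b ∧ δ a = 1 ∧ δ b = 1 ∧ (∀ c, a < c → c < b → δ c = 0) ∧ 3 ≤ b - a := by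
  by_contra hcon
  push_neg at hcon
  obtain ⟨h1, h2⟩ := hcon
  have d01 : ∀ i, δ i = 0 ∨ δ i = 1 := fun i => by have := hδ i; omega
  -- key lemma: sum from a used index i up to m is fib (m+2) - fib i
  have key : ∀ d i, m - i = d → i ≤ m → δ i = 1 →
      ∑ j ∈ Finset.Icc i m, δ j * Nat.fib (j + 1) = Nat.fib (m + 2) - Nat.fib i := by
    intro d
    induction d using Nat.strong_induction_on with
    | _ d ih =>
      intro i hd him hi
      rcases eq_or_lt_of_le him with rfl | hlt
      · rw [Finset.Icc_self, Finset.sum_singleton, hi, one_mul]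
        have := Nat.fib_add_two (n := i)
        omega
      · have hnext : δ (i + 1) = 0 := by
          have := hnc i; rw [hi, one_mul] at this; exact this
        have hP : ∃ b, i < b ∧ δ b = 1 := ⟨m, hlt, hm⟩
        set b := Nat.find hP with hbdef
        have hb := Nat.find_spec hP
        have hmin : ∀ c, i < c → c < b → δ c = 0 := by
          intro c hic hcb
          rcases d01 c with h | h
          · exact h
          · exact absurd (Nat.find_le ⟨hic, h⟩) (not_le.mpr hcb)
        have hgap := h2 i b hb.1 hi hb.2 hmin
        have hbm : b ≤ m := Nat.find_le ⟨hlt, hm⟩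
        have hbb : δ b = 1 := hb.2
        have hb2 : b = i + 2 := by
          have hne : b ≠ i + 1 := by
            intro e; rw [e] at hbb; omega
          have := hb.1
          omega
        have hi2 : δ (i + 2) = 1 := hb2 ▸ hbb
        have him2 : i + 2 ≤ m := by omega
        have ihs := ih (m - (i + 2)) (by omega) (i + 2) rfl him2 hi2
        have e1 : Finset.Icc i m = insert i (insert (i + 1) (Finset.Icc (i + 2) m)) := by
          ext x
          simp only [Finset.mem_Icc, Finset.mem_insert]
          omega
        rw [e1, Finset.sum_insert (by simp only [Finset.mem_insert, Finset.mem_Icc]; omega),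
          Finset.sum_insert (by simp only [Finset.mem_Icc]; omega),
          ihs, hi, hnext, one_mul, zero_mul, zero_add]
        have hmono : Nat.fib (i + 2) ≤ Nat.fib (m + 2) :=
          Nat.fib_mono (by omega)
        have hf := Nat.fib_add_two (n := i)
        have hf2 := Nat.fib_add_two (n := m)
        have hmono2 : Nat.fib i ≤ Nat.fib (i + 2) := Nat.fib_mono (by omega)
        omega
  have hm1 : 1 ≤ m := by
    by_contra hh
    exact h1 (hout 1 (by omega)) (hout 2 (by omega))
  have hs : δ 1 = 1 ∨ δ 2 = 1 := by
    rcases d01 1 with h | h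
    · rcases d01 2 with h' | h'
      · exact absurd h' (h1 h)
      · exact Or.inr h'
    · exact Or.inl h
  rcases hs with hs | hs
  · have := key (m - 1) 1 rfl hm1 hs
    rw [this] at hsum
    exact hnot (m + 1) (by omega) (by simpa using hsum)
  · have hd1 : δ 1 = 0 := by
      have h' := hnc 1
      rcases d01 1 with h | h
      · exact h
      · rw [h, one_mul] at h'
        have h'' : δ (1 + 1) = 1 := hs
        omega
    have hm2 : 2 ≤ m := by
      by_contra hh
      have : δ 2 = 0 := hout 2 (by omega)
      omega
    have hk := key (m - 2) 2 rfl hm2 hs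
    have e1 : Finset.Icc 1 m = insert 1 (Finset.Icc 2 m) := by
      ext x
      simp only [Finset.mem_Icc, Finset.mem_insert]
      omega
    rw [e1, Finset.sum_insert (by simp), hd1, zero_mul, zero_add, hk] at hsum
    exact hnot (m + 1) (by omega) (by simpa using hsum)
end
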